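/- Eta-expansion in DAf, negative case: for every negative-output (succedent asynchronous) type N, the focused sequent [vec(N)] ⊢w N (with the antecedent occurrence of N focalised) is derivable in the weakly focalised calculus DAf. -/

import Mathlib

/-!
Formalisation of the displacement calculus with additives DA, the weakly
focalised calculus DAf (with and without Cut) and the strongly focalised
calculus DAFoc, following Morrill–Valentín.
-/

namespace DA

/-- Bias of atomic types. -/
inductive Bias : Type where
  | pos
  | neg
deriving DecidableEq

/-- Types of the displacement calculus with additives, indexed by their sort. -/
inductive Ty : ℕ → Type where
  | atom (b : Bias) (name : ℕ) (i : ℕ) : Ty i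
  | over {i j : ℕ} : Ty (i + j) → Ty j → Ty i                                   -- C / B
  | under {i j : ℕ} : Ty i → Ty (i + j) → Ty j                                  -- A \ C
  | prod {i j : ℕ} : Ty i → Ty j → Ty (i + j)                                   -- A • B
  | unitI : Ty 0                                                                -- I
  | circ {i j : ℕ} (k : ℕ) (hk : 1 ≤ k ∧ k ≤ i + 1) : Ty (i + j) → Ty j → Ty (i + 1)   -- C ↑ₖ B
  | infx {i j : ℕ} (k : ℕ) (hk : 1 ≤ k ∧ k ≤ i + 1) : Ty (i + 1) → Ty (i + j) → Ty j   -- A ↓ₖ C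
  | wprod {i j : ℕ} (k : ℕ) (hk : 1 ≤ k ∧ k ≤ i + 1) : Ty (i + 1) → Ty j → Ty (i + j)  -- A ⊙ₖ B
  | unitJ : Ty 1                                                                -- J
  | amp {i : ℕ} : Ty i → Ty i → Ty i                                            -- A & B
  | oplus {i : ℕ} : Ty i → Ty i → Ty i                                          -- A ⊕ B

/-- `posb A = true` iff `A` is synchronous as an output (positive output /
asynchronous as an input): positive atoms and `•`, `I`, `⊙ₖ`, `J`, `⊕`.
Otherwise `A` is synchronous as an input (negative atoms and `/`, `\`, `↑ₖ`,
`↓ₖ`, `&`). -/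
def posb {i : ℕ} : Ty i → Bool
  | .atom .pos _ _ => true
  | .atom .neg _ _ => false
  | .over _ _ => false
  | .under _ _ => false
  | .prod _ _ => true
  | .unitI => true
  | .circ _ _ _ _ => false
  | .infx _ _ _ _ => false
  | .wprod _ _ _ _ => true
  | .unitJ => true
  | .amp _ _ => false
  | .oplus _ _ => true

def isAtom {i : ℕ} : Ty i → Bool
  | .atom _ _ _ => true
  | _ => false

/-- Elements of configurations: the separator `1`, types of sort 0, and
figures `A{Δ₁ : … : Δ_{sA}}` of types of sort `> 0`; together with *boxed*
(focalised) variants of the latter two, used by the focalised calculi. -/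
inductive BTree : Type where
  | sep : BTree
  | type0 : Ty 0 → BTree
  | btype0 : Ty 0 → BTree
  | fig {i : ℕ} : Ty (i + 1) → (Fin (i + 1) → List BTree) → BTree
  | bfig {i : ℕ} : Ty (i + 1) → (Fin (i + 1) → List BTree) → BTree

/-- Configurations (possibly containing boxed, i.e. focalised, occurrences). -/
abbrev BConfig := List BTree

/-- The figure `vec(A)` of a type `A`. -/
def vecT {i : ℕ} (A : Ty i) : BTree :=
  match i, A with
  | 0, A => .type0 A
  | _ + 1, A => .fig A (fun _ => [BTree.sep])

def vec {i : ℕ} (A : Ty i) : BConfig := [vecT A]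

/-- The boxed (focalised) figure `[vec(A)]` of a type `A`. -/
def bvecT {i : ℕ} (A : Ty i) : BTree :=
  match i, A with
  | 0, A => .btype0 A
  | _ + 1, A => .bfig A (fun _ => [BTree.sep])

def bvec {i : ℕ} (A : Ty i) : BConfig := [bvecT A]

/-- The premise occurrence of an active antecedent subformula in a synchronous
rule: focalised (boxed) if it is synchronous in the antecedent (negative),
unfocalised if asynchronous (positive). -/
def fvec {i : ℕ} (A : Ty i) : BConfig := if posb A then vec A else bvec A

/-! Sort of a tree / configuration: its number of separators. -/
mutual
  inductive TreeSort : BTree → ℕ → Prop where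
    | sep : TreeSort .sep 1
    | type0 (A : Ty 0) : TreeSort (.type0 A) 0
    | btype0 (A : Ty 0) : TreeSort (.btype0 A) 0
    | fig {i : ℕ} (A : Ty (i + 1)) (args : Fin (i + 1) → BConfig) (ns : Fin (i + 1) → ℕ) :
        (∀ k, ConfigSort (args k) (ns k)) → TreeSort (.fig A args) (Finset.univ.sum ns)
    | bfig {i : ℕ} (A : Ty (i + 1)) (args : Fin (i + 1) → BConfig) (ns : Fin (i + 1) → ℕ) :
        (∀ k, ConfigSort (args k) (ns k)) → TreeSort (.bfig A args) (Finset.univ.sum ns)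
  inductive ConfigSort : BConfig → ℕ → Prop where
    | nil : ConfigSort [] 0
    | cons {t : BTree} {ts : BConfig} {n m : ℕ} :
        TreeSort t n → ConfigSort ts m → ConfigSort (t :: ts) (n + m)
end

/-! Number of boxed (focalised) formula occurrences in a tree / configuration. -/
mutual
  inductive TBoxes : BTree → ℕ → Prop where
    | sep : TBoxes .sep 0
    | type0 (A : Ty 0) : TBoxes (.type0 A) 0
    | btype0 (A : Ty 0) : TBoxes (.btype0 A) 1
    | fig {i : ℕ} (A : Ty (i + 1)) (args : Fin (i + 1) → BConfig) (ns : Fin (i + 1) → ℕ) :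
        (∀ k, CBoxes (args k) (ns k)) → TBoxes (.fig A args) (Finset.univ.sum ns)
    | bfig {i : ℕ} (A : Ty (i + 1)) (args : Fin (i + 1) → BConfig) (ns : Fin (i + 1) → ℕ) :
        (∀ k, CBoxes (args k) (ns k)) → TBoxes (.bfig A args) (Finset.univ.sum ns + 1)
  inductive CBoxes : BConfig → ℕ → Prop where
    | nil : CBoxes [] 0
    | cons {t : BTree} {ts : BConfig} {n m : ℕ} :
        TBoxes t n → CBoxes ts m → CBoxes (t :: ts) (n + m)
end

/-! The fold `Γ ⊗ ⟨Δ₁ : … : Δ_i⟩`: `FoldC Γ [Δ₁,…,Δ_i] res` holds iff `res` is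
the result of replacing the successive separators of `Γ` by `Δ₁,…,Δ_i`. -/
mutual
  inductive FoldT : BTree → List BConfig → BConfig → Prop where
    | sep (Δ : BConfig) : FoldT .sep [Δ] Δ
    | type0 (A : Ty 0) : FoldT (.type0 A) [] [.type0 A]
    | btype0 (A : Ty 0) : FoldT (.btype0 A) [] [.btype0 A]
    | fig {i : ℕ} (A : Ty (i + 1)) (args args' : Fin (i + 1) → BConfig)
        (reps : Fin (i + 1) → List BConfig) :
        (∀ k, FoldC (args k) (reps k) (args' k)) →
        FoldT (.fig A args) (List.ofFn reps).flatten [.fig A args']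
    | bfig {i : ℕ} (A : Ty (i + 1)) (args args' : Fin (i + 1) → BConfig)
        (reps : Fin (i + 1) → List BConfig) :
        (∀ k, FoldC (args k) (reps k) (args' k)) →
        FoldT (.bfig A args) (List.ofFn reps).flatten [.bfig A args']
  inductive FoldC : BConfig → List BConfig → BConfig → Prop where
    | nil : FoldC [] [] []
    | cons {t : BTree} {ts : BConfig} {r1 r2 : List BConfig} {c1 c2 : BConfig} :
        FoldT t r1 c1 → FoldC ts r2 c2 → FoldC (t :: ts) (r1 ++ r2) (c1 ++ c2)
end

/-- The `k`-th metalinguistic wrap `Δ |ₖ Γ`: `Wrap Δ k Γ res` holds iff `res`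
is the result of replacing the `k`-th separator of `Δ` by `Γ`. -/
def Wrap (Δ : BConfig) (k : ℕ) (Γ res : BConfig) : Prop :=
  ∃ n : ℕ, ConfigSort Δ n ∧
    FoldC Δ ((List.replicate n ([BTree.sep] : BConfig)).set (k - 1) Γ) res

/-! One-hole contexts `Δ₀(—)` for configurations: the hole is a configuration
position, either at the top level or nested inside a figure argument. -/
mutual
  inductive THole : Type where
    | fig {i : ℕ} (A : Ty (i + 1)) (args : Fin (i + 1) → BConfig) (k : Fin (i + 1))
        (c : CHole) : THole
    | bfig {i : ℕ} (A : Ty (i + 1)) (args : Fin (i + 1) → BConfig) (k : Fin (i + 1))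
        (c : CHole) : THole
  inductive CHole : Type where
    | top (pre post : BConfig) : CHole
    | deep (pre : BConfig) (t : THole) (post : BConfig) : CHole
end

/-! Plugging a configuration into a one-hole context. -/
mutual
  inductive PlugT : THole → BConfig → BTree → Prop where
    | fig {i : ℕ} (A : Ty (i + 1)) (args : Fin (i + 1) → BConfig) (k : Fin (i + 1))
        (c : CHole) (Γ plugged : BConfig) :
        PlugC c Γ plugged → PlugT (.fig A args k c) Γ (.fig A (Function.update args k plugged))
    | bfig {i : ℕ} (A : Ty (i + 1)) (args : Fin (i + 1) → BConfig) (k : Fin (i + 1))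
        (c : CHole) (Γ plugged : BConfig) :
        PlugC c Γ plugged → PlugT (.bfig A args k c) Γ (.bfig A (Function.update args k plugged))
  inductive PlugC : CHole → BConfig → BConfig → Prop where
    | top (pre post Γ : BConfig) : PlugC (.top pre post) Γ (pre ++ Γ ++ post)
    | deep (pre post Γ : BConfig) (t : THole) (tr : BTree) :
        PlugT t Γ tr → PlugC (.deep pre t post) Γ (pre ++ tr :: post)
end

/-- The data `Δ⟨—⟩ = Δ₀(— ⊗ ⟨Δ₁ : … : Δ_i⟩)` of a context in the generalised
sense of the displacement calculus. -/
structure Zone : Type where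
  hole : CHole
  reps : List BConfig

/-- `Sub Z Γ res` holds iff `res = Δ⟨Γ⟩` for the context `Δ⟨—⟩` given by `Z`,
i.e. `res = Δ₀(Γ ⊗ ⟨Δ₁ : … : Δ_i⟩)`. -/
def Sub (Z : Zone) (Γ res : BConfig) : Prop :=
  ∃ folded : BConfig, FoldC Γ Z.reps folded ∧ PlugC Z.hole folded res

/-- The displacement calculus with additives DA: `DADeriv Δ i A` is
derivability of the sequent `Δ ⇒ A` (identity axiom restricted to atoms). -/
inductive DADeriv : BConfig → ∀ i : ℕ, Ty i → Prop where
  | id (b : Bias) (name i : ℕ) :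
      DADeriv (vec (.atom b name i)) i (.atom b name i)
  | overR {i j : ℕ} {Γ : BConfig} {C : Ty (i + j)} {B : Ty j} :
      DADeriv (Γ ++ vec B) (i + j) C → DADeriv Γ i (.over C B)
  | overL {i j d : ℕ} {Γ s1 s2 : BConfig} {B : Ty j} {C : Ty (i + j)} {Z : Zone} {D : Ty d} :
      DADeriv Γ j B → Sub Z (vec C) s1 → DADeriv s1 d D →
      Sub Z (vec (.over C B) ++ Γ) s2 → DADeriv s2 d D
  | underR {i j : ℕ} {Γ : BConfig} {A : Ty i} {C : Ty (i + j)} :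
      DADeriv (vec A ++ Γ) (i + j) C → DADeriv Γ j (.under A C)
  | underL {i j d : ℕ} {Γ s1 s2 : BConfig} {A : Ty i} {C : Ty (i + j)} {Z : Zone} {D : Ty d} :
      DADeriv Γ i A → Sub Z (vec C) s1 → DADeriv s1 d D →
      Sub Z (Γ ++ vec (.under A C)) s2 → DADeriv s2 d D
  | prodR {i j : ℕ} {Γ1 Γ2 : BConfig} {A : Ty i} {B : Ty j} :
      DADeriv Γ1 i A → DADeriv Γ2 j B → DADeriv (Γ1 ++ Γ2) (i + j) (.prod A B)
  | prodL {i j d : ℕ} {s1 s2 : BConfig} {A : Ty i} {B : Ty j} {Z : Zone} {D : Ty d} :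
      Sub Z (vec A ++ vec B) s1 → DADeriv s1 d D →
      Sub Z (vec (.prod A B)) s2 → DADeriv s2 d D
  | unitIR : DADeriv [] 0 .unitI
  | unitIL {d : ℕ} {s1 s2 : BConfig} {Z : Zone} {D : Ty d} :
      Sub Z [] s1 → DADeriv s1 d D → Sub Z (vec .unitI) s2 → DADeriv s2 d D
  | circR {i j : ℕ} (k : ℕ) (hk : 1 ≤ k ∧ k ≤ i + 1) {Γ w : BConfig}
      {C : Ty (i + j)} {B : Ty j} :
      Wrap Γ k (vec B) w → DADeriv w (i + j) C → DADeriv Γ (i + 1) (.circ k hk C B)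
  | circL {i j d : ℕ} (k : ℕ) (hk : 1 ≤ k ∧ k ≤ i + 1) {Γ w s1 s2 : BConfig}
      {C : Ty (i + j)} {B : Ty j} {Z : Zone} {D : Ty d} :
      DADeriv Γ j B → Sub Z (vec C) s1 → DADeriv s1 d D →
      Wrap (vec (Ty.circ k hk C B)) k Γ w → Sub Z w s2 → DADeriv s2 d D
  | infxR {i j : ℕ} (k : ℕ) (hk : 1 ≤ k ∧ k ≤ i + 1) {Γ w : BConfig}
      {A : Ty (i + 1)} {C : Ty (i + j)} :
      Wrap (vec A) k Γ w → DADeriv w (i + j) C → DADeriv Γ j (.infx k hk A C)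
  | infxL {i j d : ℕ} (k : ℕ) (hk : 1 ≤ k ∧ k ≤ i + 1) {Γ w s1 s2 : BConfig}
      {A : Ty (i + 1)} {C : Ty (i + j)} {Z : Zone} {D : Ty d} :
      DADeriv Γ (i + 1) A → Sub Z (vec C) s1 → DADeriv s1 d D →
      Wrap Γ k (vec (Ty.infx k hk A C)) w → Sub Z w s2 → DADeriv s2 d D
  | wprodR {i j : ℕ} (k : ℕ) (hk : 1 ≤ k ∧ k ≤ i + 1) {Γ1 Γ2 w : BConfig}
      {A : Ty (i + 1)} {B : Ty j} :
      DADeriv Γ1 (i + 1) A → DADeriv Γ2 j B → Wrap Γ1 k Γ2 w →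
      DADeriv w (i + j) (.wprod k hk A B)
  | wprodL {i j d : ℕ} (k : ℕ) (hk : 1 ≤ k ∧ k ≤ i + 1) {w s1 s2 : BConfig}
      {A : Ty (i + 1)} {B : Ty j} {Z : Zone} {D : Ty d} :
      Wrap (vec A) k (vec B) w → Sub Z w s1 → DADeriv s1 d D →
      Sub Z (vec (.wprod k hk A B)) s2 → DADeriv s2 d D
  | unitJR : DADeriv [BTree.sep] 1 .unitJ
  | unitJL {d : ℕ} {s1 s2 : BConfig} {Z : Zone} {D : Ty d} :
      Sub Z [BTree.sep] s1 → DADeriv s1 d D → Sub Z (vec .unitJ) s2 → DADeriv s2 d D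
  | ampR {i : ℕ} {Γ : BConfig} {A B : Ty i} :
      DADeriv Γ i A → DADeriv Γ i B → DADeriv Γ i (.amp A B)
  | ampL1 {i d : ℕ} {s1 s2 : BConfig} {A B : Ty i} {Z : Zone} {D : Ty d} :
      Sub Z (vec A) s1 → DADeriv s1 d D → Sub Z (vec (.amp A B)) s2 → DADeriv s2 d D
  | ampL2 {i d : ℕ} {s1 s2 : BConfig} {A B : Ty i} {Z : Zone} {D : Ty d} :
      Sub Z (vec B) s1 → DADeriv s1 d D → Sub Z (vec (.amp A B)) s2 → DADeriv s2 d D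
  | oplusR1 {i : ℕ} {Γ : BConfig} {A B : Ty i} :
      DADeriv Γ i A → DADeriv Γ i (.oplus A B)
  | oplusR2 {i : ℕ} {Γ : BConfig} {A B : Ty i} :
      DADeriv Γ i B → DADeriv Γ i (.oplus A B)
  | oplusL {i d : ℕ} {s1 s2 s3 : BConfig} {A B : Ty i} {Z : Zone} {D : Ty d} :
      Sub Z (vec A) s1 → DADeriv s1 d D → Sub Z (vec B) s2 → DADeriv s2 d D →
      Sub Z (vec (.oplus A B)) s3 → DADeriv s3 d D

/-! Occurrence of a type satisfying `φ` somewhere in a configuration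
(as the head type of a tree/figure, possibly nested). -/
mutual
  inductive TOcc (φ : ∀ j : ℕ, Ty j → Prop) : BTree → Prop where
    | type0 {A : Ty 0} : φ 0 A → TOcc φ (.type0 A)
    | btype0 {A : Ty 0} : φ 0 A → TOcc φ (.btype0 A)
    | figHead {i : ℕ} {A : Ty (i + 1)} {args : Fin (i + 1) → BConfig} :
        φ (i + 1) A → TOcc φ (.fig A args)
    | bfigHead {i : ℕ} {A : Ty (i + 1)} {args : Fin (i + 1) → BConfig} :
        φ (i + 1) A → TOcc φ (.bfig A args)
    | figArg {i : ℕ} {A : Ty (i + 1)} {args : Fin (i + 1) → BConfig} (k : Fin (i + 1)) :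
        COcc φ (args k) → TOcc φ (.fig A args)
    | bfigArg {i : ℕ} {A : Ty (i + 1)} {args : Fin (i + 1) → BConfig} (k : Fin (i + 1)) :
        COcc φ (args k) → TOcc φ (.bfig A args)
  inductive COcc (φ : ∀ j : ℕ, Ty j → Prop) : BConfig → Prop where
    | head {t : BTree} {ts : BConfig} : TOcc φ t → COcc φ (t :: ts)
    | tail {t : BTree} {ts : BConfig} : COcc φ ts → COcc φ (t :: ts)
end

/-- The sequent `Δ ⊢ A` contains a complex (non-atomic) asynchronous formula
occurrence: a non-atomic positive type in the antecedent, or a non-atomic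
negative succedent. -/
def HasComplexAsync (Δ : BConfig) (i : ℕ) (A : Ty i) : Prop :=
  COcc (fun _ B => posb B = true ∧ isAtom B = false) Δ ∨
    (posb A = false ∧ isAtom A = false)

/-- A sequent (antecedent plus succedent-focus flag) contains at most one
focalised formula. -/
def AtMostOne (Δ : BConfig) (f : Bool) : Prop :=
  if f then CBoxes Δ 0 else (CBoxes Δ 0 ∨ CBoxes Δ 1)

/-- A sequent contains exactly one focalised formula. -/
def ExactlyOne (Δ : BConfig) (f : Bool) : Prop :=
  if f then CBoxes Δ 0 else CBoxes Δ 1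

/-- Side condition of the strongly focalised calculus: a sequent containing a
focalised formula contains no complex asynchronous formula occurrence (and
vice versa). -/
def Ok (strong : Bool) (Δ : BConfig) (f : Bool) (i : ℕ) (A : Ty i) : Prop :=
  strong = true → ¬ ((f = true ∨ ¬ CBoxes Δ 0) ∧ HasComplexAsync Δ i A)

/-- Focalised sequent calculus: `DW cuts strong Δ f i A` is derivability of
the sequent `Δ ⊢ A`, whose succedent is focalised iff `f = true` and whose
focalised antecedent formulas are the boxed occurrences of `Δ`.
`cuts = true` allows the Cut rules (weakly focalised calculus DAf);
`cuts = false` is Cut-free DAf; `strong = true` additionally imposes the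
strong focalisation discipline (DAFoc, taken with `cuts = false`). -/
inductive DW (cuts strong : Bool) : BConfig → Bool → ∀ i : ℕ, Ty i → Prop where
  -- identity axioms, restricted to atoms
  | idP (name i : ℕ) :
      DW cuts strong (vec (.atom .pos name i)) true i (.atom .pos name i)
  | idQ (name i : ℕ) :
      DW cuts strong (bvec (.atom .neg name i)) false i (.atom .neg name i)
  -- focusing rules
  | focR {i : ℕ} {Δ : BConfig} {P : Ty i} :
      posb P = true →
      DW cuts strong Δ true i P →
      AtMostOne Δ false → Ok strong Δ false i P →
      DW cuts strong Δ false i P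
  | focL {j d : ℕ} {Q : Ty j} {D : Ty d} {Z : Zone} {s1 s2 : BConfig} :
      posb Q = false →
      Sub Z (bvec Q) s1 → DW cuts strong s1 false d D →
      Sub Z (vec Q) s2 → AtMostOne s2 false → Ok strong s2 false d D →
      DW cuts strong s2 false d D
  -- asynchronous right rules
  | overR {i j : ℕ} {Γ : BConfig} {C : Ty (i + j)} {B : Ty j} :
      DW cuts strong (Γ ++ vec B) false (i + j) C →
      AtMostOne Γ false → Ok strong Γ false i (.over C B) →
      DW cuts strong Γ false i (.over C B)
  | underR {i j : ℕ} {Γ : BConfig} {A : Ty i} {C : Ty (i + j)} :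
      DW cuts strong (vec A ++ Γ) false (i + j) C →
      AtMostOne Γ false → Ok strong Γ false j (.under A C) →
      DW cuts strong Γ false j (.under A C)
  | circR {i j : ℕ} (k : ℕ) (hk : 1 ≤ k ∧ k ≤ i + 1) {Γ w : BConfig}
      {C : Ty (i + j)} {B : Ty j} :
      Wrap Γ k (vec B) w → DW cuts strong w false (i + j) C →
      AtMostOne Γ false → Ok strong Γ false (i + 1) (.circ k hk C B) →
      DW cuts strong Γ false (i + 1) (.circ k hk C B)
  | infxR {i j : ℕ} (k : ℕ) (hk : 1 ≤ k ∧ k ≤ i + 1) {Γ w : BConfig}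
      {A : Ty (i + 1)} {C : Ty (i + j)} :
      Wrap (vec A) k Γ w → DW cuts strong w false (i + j) C →
      AtMostOne Γ false → Ok strong Γ false j (.infx k hk A C) →
      DW cuts strong Γ false j (.infx k hk A C)
  | ampR {i : ℕ} {Γ : BConfig} {A B : Ty i} :
      DW cuts strong Γ false i A → DW cuts strong Γ false i B →
      AtMostOne Γ false → Ok strong Γ false i (.amp A B) →
      DW cuts strong Γ false i (.amp A B)
  -- asynchronous left rules
  | prodL {i j d : ℕ} {f : Bool} {s1 s2 : BConfig} {A : Ty i} {B : Ty j}
      {Z : Zone} {D : Ty d} :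
      Sub Z (vec A ++ vec B) s1 → DW cuts strong s1 f d D →
      Sub Z (vec (.prod A B)) s2 → AtMostOne s2 f → Ok strong s2 f d D →
      DW cuts strong s2 f d D
  | unitIL {d : ℕ} {f : Bool} {s1 s2 : BConfig} {Z : Zone} {D : Ty d} :
      Sub Z [] s1 → DW cuts strong s1 f d D →
      Sub Z (vec .unitI) s2 → AtMostOne s2 f → Ok strong s2 f d D →
      DW cuts strong s2 f d D
  | wprodL {i j d : ℕ} (k : ℕ) (hk : 1 ≤ k ∧ k ≤ i + 1) {f : Bool}
      {w s1 s2 : BConfig} {A : Ty (i + 1)} {B : Ty j} {Z : Zone} {D : Ty d} :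
      Wrap (vec A) k (vec B) w → Sub Z w s1 → DW cuts strong s1 f d D →
      Sub Z (vec (.wprod k hk A B)) s2 → AtMostOne s2 f → Ok strong s2 f d D →
      DW cuts strong s2 f d D
  | unitJL {d : ℕ} {f : Bool} {s1 s2 : BConfig} {Z : Zone} {D : Ty d} :
      Sub Z [BTree.sep] s1 → DW cuts strong s1 f d D →
      Sub Z (vec .unitJ) s2 → AtMostOne s2 f → Ok strong s2 f d D →
      DW cuts strong s2 f d D
  | oplusL {i d : ℕ} {f : Bool} {s1 s2 s3 : BConfig} {A B : Ty i} {Z : Zone} {D : Ty d} :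
      Sub Z (vec A) s1 → DW cuts strong s1 f d D →
      Sub Z (vec B) s2 → DW cuts strong s2 f d D →
      Sub Z (vec (.oplus A B)) s3 → AtMostOne s3 f → Ok strong s3 f d D →
      DW cuts strong s3 f d D
  -- synchronous left rules (active formula focalised)
  | overL {i j d : ℕ} {Γ s1 s2 : BConfig} {B : Ty j} {C : Ty (i + j)} {Z : Zone} {D : Ty d} :
      DW cuts strong Γ (posb B) j B →
      Sub Z (fvec C) s1 → DW cuts strong s1 false d D →
      Sub Z (bvec (.over C B) ++ Γ) s2 → AtMostOne s2 false → Ok strong s2 false d D →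
      DW cuts strong s2 false d D
  | underL {i j d : ℕ} {Γ s1 s2 : BConfig} {A : Ty i} {C : Ty (i + j)} {Z : Zone} {D : Ty d} :
      DW cuts strong Γ (posb A) i A →
      Sub Z (fvec C) s1 → DW cuts strong s1 false d D →
      Sub Z (Γ ++ bvec (.under A C)) s2 → AtMostOne s2 false → Ok strong s2 false d D →
      DW cuts strong s2 false d D
  | circL {i j d : ℕ} (k : ℕ) (hk : 1 ≤ k ∧ k ≤ i + 1) {Γ w s1 s2 : BConfig}
      {C : Ty (i + j)} {B : Ty j} {Z : Zone} {D : Ty d} :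
      DW cuts strong Γ (posb B) j B →
      Sub Z (fvec C) s1 → DW cuts strong s1 false d D →
      Wrap (bvec (Ty.circ k hk C B)) k Γ w → Sub Z w s2 →
      AtMostOne s2 false → Ok strong s2 false d D →
      DW cuts strong s2 false d D
  | infxL {i j d : ℕ} (k : ℕ) (hk : 1 ≤ k ∧ k ≤ i + 1) {Γ w s1 s2 : BConfig}
      {A : Ty (i + 1)} {C : Ty (i + j)} {Z : Zone} {D : Ty d} :
      DW cuts strong Γ (posb A) (i + 1) A →
      Sub Z (fvec C) s1 → DW cuts strong s1 false d D →
      Wrap Γ k (bvec (Ty.infx k hk A C)) w → Sub Z w s2 →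
      AtMostOne s2 false → Ok strong s2 false d D →
      DW cuts strong s2 false d D
  | ampL1 {i d : ℕ} {s1 s2 : BConfig} {A B : Ty i} {Z : Zone} {D : Ty d} :
      Sub Z (fvec A) s1 → DW cuts strong s1 false d D →
      Sub Z (bvec (.amp A B)) s2 → AtMostOne s2 false → Ok strong s2 false d D →
      DW cuts strong s2 false d D
  | ampL2 {i d : ℕ} {s1 s2 : BConfig} {A B : Ty i} {Z : Zone} {D : Ty d} :
      Sub Z (fvec B) s1 → DW cuts strong s1 false d D →
      Sub Z (bvec (.amp A B)) s2 → AtMostOne s2 false → Ok strong s2 false d D →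
      DW cuts strong s2 false d D
  -- synchronous right rules (succedent focalised)
  | prodR {i j : ℕ} {Γ1 Γ2 : BConfig} {A : Ty i} {B : Ty j} :
      DW cuts strong Γ1 (posb A) i A → DW cuts strong Γ2 (posb B) j B →
      AtMostOne (Γ1 ++ Γ2) true → Ok strong (Γ1 ++ Γ2) true (i + j) (.prod A B) →
      DW cuts strong (Γ1 ++ Γ2) true (i + j) (.prod A B)
  | unitIR : DW cuts strong [] true 0 .unitI
  | wprodR {i j : ℕ} (k : ℕ) (hk : 1 ≤ k ∧ k ≤ i + 1) {Γ1 Γ2 w : BConfig}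
      {A : Ty (i + 1)} {B : Ty j} :
      DW cuts strong Γ1 (posb A) (i + 1) A → DW cuts strong Γ2 (posb B) j B →
      Wrap Γ1 k Γ2 w →
      AtMostOne w true → Ok strong w true (i + j) (.wprod k hk A B) →
      DW cuts strong w true (i + j) (.wprod k hk A B)
  | unitJR : DW cuts strong [BTree.sep] true 1 .unitJ
  | oplusR1 {i : ℕ} {Γ : BConfig} {A B : Ty i} :
      DW cuts strong Γ (posb A) i A →
      AtMostOne Γ true → Ok strong Γ true i (.oplus A B) →
      DW cuts strong Γ true i (.oplus A B)
  | oplusR2 {i : ℕ} {Γ : BConfig} {A B : Ty i} :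
      DW cuts strong Γ (posb B) i B →
      AtMostOne Γ true → Ok strong Γ true i (.oplus A B) →
      DW cuts strong Γ true i (.oplus A B)
  -- Cut rules (weakly focalised calculus only)
  | pcut1 {j d : ℕ} {f : Bool} {Γ s1 s2 : BConfig} {P : Ty j} {Z : Zone} {C : Ty d} :
      cuts = true → posb P = true →
      DW cuts strong Γ true j P →
      Sub Z (vec P) s1 → DW cuts strong s1 f d C →
      Sub Z Γ s2 → AtMostOne s2 f →
      DW cuts strong s2 f d C
  | pcut2 {j d : ℕ} {Γ s1 s2 : BConfig} {N : Ty j} {Z : Zone} {C : Ty d} :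
      cuts = true → posb N = false →
      DW cuts strong Γ false j N →
      Sub Z (bvec N) s1 → DW cuts strong s1 false d C →
      Sub Z Γ s2 → AtMostOne s2 false →
      DW cuts strong s2 false d C
  | ncut1 {j d : ℕ} {Γ s1 s2 : BConfig} {P : Ty j} {Z : Zone} {C : Ty d} :
      cuts = true → posb P = true →
      DW cuts strong Γ false j P →
      Sub Z (vec P) s1 → CBoxes s1 0 → DW cuts strong s1 false d C →
      Sub Z Γ s2 → AtMostOne s2 false →
      DW cuts strong s2 false d C
  | ncut2 {j d : ℕ} {f : Bool} {Γ s1 s2 : BConfig} {N : Ty j} {Z : Zone} {C : Ty d} :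
      cuts = true → posb N = false →
      CBoxes Γ 0 → DW cuts strong Γ false j N →
      Sub Z (vec N) s1 → DW cuts strong s1 f d C →
      Sub Z Γ s2 → AtMostOne s2 f →
      DW cuts strong s2 f d C

/-- The weakly focalised calculus DAf. -/
abbrev DAf (Δ : BConfig) (f : Bool) (i : ℕ) (A : Ty i) : Prop := DW true false Δ f i A

/-- Cut-free DAf. -/
abbrev DAfCutFree (Δ : BConfig) (f : Bool) (i : ℕ) (A : Ty i) : Prop := DW false false Δ f i A

/-- The strongly focalised calculus DAFoc. -/
abbrev DAFoc (Δ : BConfig) (f : Bool) (i : ℕ) (A : Ty i) : Prop := DW false true Δ f i A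

/-- Transport of a type along an equality of sorts. -/
def tcast {i j : ℕ} (h : i = j) (A : Ty i) : Ty j := h ▸ A

end DA

namespace DA

/-!
Both halves of eta-expansion are proved together by induction on the type: `vec A ⊢ [A]` for
positive `A` and `[vec A] ⊢ A` for negative `A`. For a compound type one applies the
asynchronous rule of its main connective and then the synchronous one, which leaves one
eta-expansion per immediate subformula; a subformula of the wrong polarity for its premise is
first brought into shape by a focusing rule. No Cut is used.
-/

open List

section Configurations

lemma flatten_ofFn_singleton {α : Type*} {n : ℕ} (g : Fin n → α) :
    (ofFn fun m => [g m]).flatten = ofFn g := by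
  induction n with
  | zero => simp
  | succ n ih => simp [ofFn_succ, ih]

lemma flatten_ofFn_replicate {α : Type*} (x : α) {n : ℕ} (ns : Fin n → ℕ) :
    (ofFn fun k => replicate (ns k) x).flatten = replicate (∑ k, ns k) x := by
  induction n with
  | zero => simp
  | succ n ih => rw [ofFn_succ, flatten_cons, ih, Fin.sum_univ_succ, replicate_add]

lemma ofFn_update_const {α : Type*} {n : ℕ} (idx : Fin n) (a b : α) :
    ofFn (Function.update (fun _ => b) idx a) = (replicate n b).set idx a := by
  apply List.ext_getElem <;>
    simp [Function.update_apply, List.getElem_set, Fin.ext_iff, eq_comm]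

lemma sum_update_const {n : ℕ} (idx : Fin (n + 1)) (c m : ℕ) :
    ∑ q, Function.update (fun _ => c) idx m q = n * c + m := by
  rw [Finset.sum_update_of_mem (Finset.mem_univ idx), Finset.sum_const,
    Finset.card_sdiff_of_subset (by simp)]
  simp [add_comm]

lemma configSort_singleton {t : BTree} {n : ℕ} (h : TreeSort t n) : ConfigSort [t] n := by
  simpa using ConfigSort.cons h ConfigSort.nil

theorem ConfigSort.append : ∀ {Γ₁ Γ₂ : BConfig} {n₁ n₂ : ℕ},
    ConfigSort Γ₁ n₁ → ConfigSort Γ₂ n₂ → ConfigSort (Γ₁ ++ Γ₂) (n₁ + n₂)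
  | _, _, _, _, .nil, h₂ => by simpa using h₂
  | _, _, _, _, .cons ht hts, h₂ => by
      simpa [Nat.add_assoc] using ConfigSort.cons ht (hts.append h₂)

lemma cboxes_singleton {t : BTree} {n : ℕ} (h : TBoxes t n) : CBoxes [t] n := by
  simpa using CBoxes.cons h CBoxes.nil

theorem CBoxes.append : ∀ {Γ₁ Γ₂ : BConfig} {n₁ n₂ : ℕ},
    CBoxes Γ₁ n₁ → CBoxes Γ₂ n₂ → CBoxes (Γ₁ ++ Γ₂) (n₁ + n₂)
  | _, _, _, _, .nil, h₂ => by simpa using h₂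
  | _, _, _, _, .cons ht hts, h₂ => by
      simpa [Nat.add_assoc] using CBoxes.cons ht (hts.append h₂)

lemma foldC_singleton {t : BTree} {r : List BConfig} {c : BConfig} (h : FoldT t r c) :
    FoldC [t] r c := by
  simpa using FoldC.cons h FoldC.nil

theorem FoldC.append : ∀ {Γ₁ Γ₂ : BConfig} {r₁ r₂ : List BConfig} {c₁ c₂ : BConfig},
    FoldC Γ₁ r₁ c₁ → FoldC Γ₂ r₂ c₂ → FoldC (Γ₁ ++ Γ₂) (r₁ ++ r₂) (c₁ ++ c₂)
  | _, _, _, _, _, _, .nil, h₂ => h₂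
  | _, _, _, _, _, _, .cons ht hts, h₂ => by simpa using FoldC.cons ht (hts.append h₂)

mutual

theorem TreeSort.foldC_self : ∀ {t : BTree} {n : ℕ}, TreeSort t n →
    FoldC [t] (replicate n [BTree.sep]) [t]
  | _, _, .sep => foldC_singleton (FoldT.sep _)
  | _, _, .type0 A => foldC_singleton (FoldT.type0 A)
  | _, _, .btype0 A => foldC_singleton (FoldT.btype0 A)
  | _, _, .fig A args _ h => by
      simpa only [flatten_ofFn_replicate] using
        foldC_singleton (FoldT.fig A args args _ fun k => (h k).foldC_self)
  | _, _, .bfig A args _ h => by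
      simpa only [flatten_ofFn_replicate] using
        foldC_singleton (FoldT.bfig A args args _ fun k => (h k).foldC_self)

/-- `Γ ⊗ ⟨1 : … : 1⟩ = Γ`. -/
theorem ConfigSort.foldC_self : ∀ {Γ : BConfig} {n : ℕ}, ConfigSort Γ n →
    FoldC Γ (replicate n [BTree.sep]) Γ
  | _, _, .nil => FoldC.nil
  | _, _, .cons ht hts => by
      rw [replicate_add]
      exact ht.foldC_self.append hts.foldC_self

end

/-- The context `Δ⟨—⟩ = —` for configurations of sort `n`. -/
def Zone.trivial (n : ℕ) : Zone := ⟨.top [] [], replicate n [BTree.sep]⟩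

lemma ConfigSort.sub_trivial {Γ : BConfig} {n : ℕ} (h : ConfigSort Γ n) :
    Sub (Zone.trivial n) Γ Γ :=
  ⟨Γ, h.foldC_self, by simpa [Zone.trivial] using PlugC.top [] [] Γ⟩

/-- `A{sepsUpdate idx Γ}` is the wrap `vec(A) |_(idx + 1) Γ`. -/
def sepsUpdate {n : ℕ} (idx : Fin n) (Γ : BConfig) : Fin n → BConfig :=
  Function.update (fun _ => [BTree.sep]) idx Γ

lemma forall_sepsUpdate {P : BConfig → ℕ → Prop} {n c m : ℕ} {Γ : BConfig}
    (hsep : P [BTree.sep] c) (hΓ : P Γ m) (idx : Fin n) :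
    ∀ q, P (sepsUpdate idx Γ q) (Function.update (fun _ => c) idx m q) := by
  intro q
  rcases eq_or_ne q idx with rfl | h
  · simpa [sepsUpdate] using hΓ
  · simpa [sepsUpdate, h] using hsep

lemma configSort_sep : ConfigSort [BTree.sep] 1 := configSort_singleton .sep

lemma cboxes_sep : CBoxes [BTree.sep] 0 := cboxes_singleton .sep

lemma configSort_vec : ∀ {n : ℕ} (A : Ty n), ConfigSort (vec A) n
  | 0, A => configSort_singleton (.type0 A)
  | n + 1, A => by
      simpa [vec, vecT] using configSort_singleton (.fig A _ _ fun _ => configSort_sep)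

lemma configSort_bvec : ∀ {n : ℕ} (A : Ty n), ConfigSort (bvec A) n
  | 0, A => configSort_singleton (.btype0 A)
  | n + 1, A => by
      simpa [bvec, bvecT] using configSort_singleton (.bfig A _ _ fun _ => configSort_sep)

lemma configSort_fvec {n : ℕ} (A : Ty n) : ConfigSort (fvec A) n := by
  unfold fvec
  split
  · exact configSort_vec A
  · exact configSort_bvec A

lemma cboxes_vec : ∀ {n : ℕ} (A : Ty n), CBoxes (vec A) 0
  | 0, A => cboxes_singleton (.type0 A)
  | n + 1, A => by
      simpa [vec, vecT] using cboxes_singleton (.fig A _ _ fun _ => cboxes_sep)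

lemma cboxes_bvec : ∀ {n : ℕ} (A : Ty n), CBoxes (bvec A) 1
  | 0, A => cboxes_singleton (.btype0 A)
  | n + 1, A => by
      simpa [bvec, bvecT] using cboxes_singleton (.bfig A _ _ fun _ => cboxes_sep)

variable {n m : ℕ} (A : Ty (n + 1)) (idx : Fin (n + 1)) {Γ : BConfig}

lemma configSort_fig_sepsUpdate (hΓ : ConfigSort Γ m) :
    ConfigSort [.fig A (sepsUpdate idx Γ)] (n + m) := by
  simpa [sum_update_const] using
    configSort_singleton (.fig A _ _ (forall_sepsUpdate configSort_sep hΓ idx))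

lemma configSort_bfig_sepsUpdate (hΓ : ConfigSort Γ m) :
    ConfigSort [.bfig A (sepsUpdate idx Γ)] (n + m) := by
  simpa [sum_update_const] using
    configSort_singleton (.bfig A _ _ (forall_sepsUpdate configSort_sep hΓ idx))

lemma cboxes_fig_sepsUpdate (hΓ : CBoxes Γ m) :
    CBoxes [.fig A (sepsUpdate idx Γ)] m := by
  simpa [sum_update_const] using
    cboxes_singleton (.fig A _ _ (forall_sepsUpdate cboxes_sep hΓ idx))

lemma cboxes_bfig_sepsUpdate (hΓ : CBoxes Γ m) :
    CBoxes [.bfig A (sepsUpdate idx Γ)] (m + 1) := by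
  simpa [sum_update_const] using
    cboxes_singleton (.bfig A _ _ (forall_sepsUpdate cboxes_sep hΓ idx))

lemma wrap_vec {n k : ℕ} (A : Ty (n + 1)) (hk : 1 ≤ k ∧ k ≤ n + 1) (Γ : BConfig) :
    Wrap (vec A) k Γ [.fig A (sepsUpdate ⟨k - 1, by omega⟩ Γ)] := by
  refine ⟨n + 1, configSort_vec A, ?_⟩
  have h := FoldT.fig A (fun _ => [.sep]) (sepsUpdate ⟨k - 1, by omega⟩ Γ) _
    fun q => foldC_singleton (FoldT.sep (sepsUpdate ⟨k - 1, by omega⟩ Γ q))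
  rw [flatten_ofFn_singleton, sepsUpdate, ofFn_update_const] at h
  exact foldC_singleton h

lemma wrap_bvec {n k : ℕ} (A : Ty (n + 1)) (hk : 1 ≤ k ∧ k ≤ n + 1) (Γ : BConfig) :
    Wrap (bvec A) k Γ [.bfig A (sepsUpdate ⟨k - 1, by omega⟩ Γ)] := by
  refine ⟨n + 1, configSort_bvec A, ?_⟩
  have h := FoldT.bfig A (fun _ => [.sep]) (sepsUpdate ⟨k - 1, by omega⟩ Γ) _
    fun q => foldC_singleton (FoldT.sep (sepsUpdate ⟨k - 1, by omega⟩ Γ q))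
  rw [flatten_ofFn_singleton, sepsUpdate, ofFn_update_const] at h
  exact foldC_singleton h

end Configurations

lemma ok_weak {Δ : BConfig} {f : Bool} {i : ℕ} {A : Ty i} : Ok false Δ f i A := nofun

def EtaExpands (cuts : Bool) {i : ℕ} (A : Ty i) : Prop :=
  (posb A = true → DW cuts false (vec A) true i A) ∧
    (posb A = false → DW cuts false (bvec A) false i A)

namespace EtaExpands

variable {cuts : Bool} {i : ℕ} {A : Ty i}

lemma of_pos (hA : posb A = true) (h : DW cuts false (vec A) true i A) : EtaExpands cuts A :=
  ⟨fun _ => h, fun h' => absurd (hA.symm.trans h') Bool.noConfusion⟩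

lemma of_neg (hA : posb A = false) (h : DW cuts false (bvec A) false i A) :
    EtaExpands cuts A :=
  ⟨fun h' => absurd (hA.symm.trans h') Bool.noConfusion, fun _ => h⟩

lemma derive_vec (h : EtaExpands cuts A) : DW cuts false (vec A) (posb A) i A := by
  cases hA : posb A
  · exact DW.focL hA (configSort_bvec A).sub_trivial (h.2 hA) (configSort_vec A).sub_trivial
      (Or.inl (cboxes_vec A)) ok_weak
  · exact h.1 hA

lemma derive_fvec (h : EtaExpands cuts A) : DW cuts false (fvec A) false i A := by
  unfold fvec
  cases hA : posb A
  · exact h.2 hA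
  · exact DW.focR hA (h.1 hA) (Or.inl (cboxes_vec A)) ok_weak

end EtaExpands

section EtaExpansionSteps

open EtaExpands

variable {cuts : Bool}

lemma etaExpands_atom (b : Bias) (name i : ℕ) : EtaExpands cuts (Ty.atom b name i) := by
  cases b
  · exact of_pos rfl (DW.idP name i)
  · exact of_neg rfl (DW.idQ name i)

variable {i j : ℕ}

lemma etaExpands_over {C : Ty (i + j)} {B : Ty j}
    (hC : EtaExpands cuts C) (hB : EtaExpands cuts B) : EtaExpands cuts (.over C B) :=
  of_neg rfl <| DW.overR
    (DW.overL hB.derive_vec (configSort_fvec C).sub_trivial hC.derive_fvec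
      ((configSort_bvec _).append (configSort_vec B)).sub_trivial
      (Or.inr (by simpa using (cboxes_bvec _).append (cboxes_vec B))) ok_weak)
    (Or.inr (cboxes_bvec _)) ok_weak

lemma etaExpands_under {A : Ty i} {C : Ty (i + j)}
    (hA : EtaExpands cuts A) (hC : EtaExpands cuts C) : EtaExpands cuts (.under A C) :=
  of_neg rfl <| DW.underR
    (DW.underL hA.derive_vec (configSort_fvec C).sub_trivial hC.derive_fvec
      ((configSort_vec A).append (configSort_bvec _)).sub_trivial
      (Or.inr (by simpa using (cboxes_vec A).append (cboxes_bvec _))) ok_weak)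
    (Or.inr (cboxes_bvec _)) ok_weak

lemma etaExpands_prod {A : Ty i} {B : Ty j} (hA : EtaExpands cuts A) (hB : EtaExpands cuts B) :
    EtaExpands cuts (.prod A B) :=
  of_pos rfl <| DW.prodL ((configSort_vec A).append (configSort_vec B)).sub_trivial
    (DW.prodR hA.derive_vec hB.derive_vec
      (show CBoxes _ 0 by simpa using (cboxes_vec A).append (cboxes_vec B)) ok_weak)
    (configSort_vec _).sub_trivial (cboxes_vec _) ok_weak

lemma etaExpands_unitI : EtaExpands cuts Ty.unitI :=
  of_pos rfl <| DW.unitIL ConfigSort.nil.sub_trivial DW.unitIR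
    (configSort_vec _).sub_trivial (cboxes_vec _) ok_weak

lemma etaExpands_unitJ : EtaExpands cuts Ty.unitJ :=
  of_pos rfl <| DW.unitJL configSort_sep.sub_trivial DW.unitJR
    (configSort_vec _).sub_trivial (cboxes_vec _) ok_weak

lemma etaExpands_circ {k : ℕ} (hk : 1 ≤ k ∧ k ≤ i + 1) {C : Ty (i + j)} {B : Ty j}
    (hC : EtaExpands cuts C) (hB : EtaExpands cuts B) : EtaExpands cuts (.circ k hk C B) :=
  have hw := wrap_bvec (Ty.circ k hk C B) hk (vec B)
  of_neg rfl <| DW.circR k hk hw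
    (DW.circL k hk hB.derive_vec (configSort_fvec C).sub_trivial hC.derive_fvec hw
      (configSort_bfig_sepsUpdate _ _ (configSort_vec B)).sub_trivial
      (Or.inr (by simpa using cboxes_bfig_sepsUpdate _ _ (cboxes_vec B))) ok_weak)
    (Or.inr (cboxes_bvec _)) ok_weak

lemma etaExpands_infx {k : ℕ} (hk : 1 ≤ k ∧ k ≤ i + 1) {A : Ty (i + 1)} {C : Ty (i + j)}
    (hA : EtaExpands cuts A) (hC : EtaExpands cuts C) : EtaExpands cuts (.infx k hk A C) :=
  have hw := wrap_vec A hk (bvec (Ty.infx k hk A C))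
  of_neg rfl <| DW.infxR k hk hw
    (DW.infxL k hk hA.derive_vec (configSort_fvec C).sub_trivial hC.derive_fvec hw
      (configSort_fig_sepsUpdate _ _ (configSort_bvec _)).sub_trivial
      (Or.inr (cboxes_fig_sepsUpdate _ _ (cboxes_bvec _))) ok_weak)
    (Or.inr (cboxes_bvec _)) ok_weak

lemma etaExpands_wprod {k : ℕ} (hk : 1 ≤ k ∧ k ≤ i + 1) {A : Ty (i + 1)} {B : Ty j}
    (hA : EtaExpands cuts A) (hB : EtaExpands cuts B) : EtaExpands cuts (.wprod k hk A B) :=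
  have hw := wrap_vec A hk (vec B)
  of_pos rfl <| DW.wprodL k hk hw (configSort_fig_sepsUpdate _ _ (configSort_vec B)).sub_trivial
    (DW.wprodR k hk hA.derive_vec hB.derive_vec hw
      (cboxes_fig_sepsUpdate _ _ (cboxes_vec B)) ok_weak)
    (configSort_vec _).sub_trivial (cboxes_vec _) ok_weak

lemma etaExpands_amp {A B : Ty i} (hA : EtaExpands cuts A) (hB : EtaExpands cuts B) :
    EtaExpands cuts (.amp A B) :=
  of_neg rfl <| DW.ampR
    (DW.ampL1 (configSort_fvec A).sub_trivial hA.derive_fvec (configSort_bvec _).sub_trivial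
      (Or.inr (cboxes_bvec _)) ok_weak)
    (DW.ampL2 (configSort_fvec B).sub_trivial hB.derive_fvec (configSort_bvec _).sub_trivial
      (Or.inr (cboxes_bvec _)) ok_weak)
    (Or.inr (cboxes_bvec _)) ok_weak

lemma etaExpands_oplus {A B : Ty i} (hA : EtaExpands cuts A) (hB : EtaExpands cuts B) :
    EtaExpands cuts (.oplus A B) :=
  of_pos rfl <| DW.oplusL
    (configSort_vec A).sub_trivial (DW.oplusR1 hA.derive_vec (cboxes_vec A) ok_weak)
    (configSort_vec B).sub_trivial (DW.oplusR2 hB.derive_vec (cboxes_vec B) ok_weak)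
    (configSort_vec _).sub_trivial (cboxes_vec _) ok_weak

end EtaExpansionSteps

theorem etaExpands (cuts : Bool) : ∀ {i : ℕ} (A : Ty i), EtaExpands cuts A
  | _, .atom b name i => etaExpands_atom b name i
  | _, .over C B => etaExpands_over (etaExpands cuts C) (etaExpands cuts B)
  | _, .under A C => etaExpands_under (etaExpands cuts A) (etaExpands cuts C)
  | _, .prod A B => etaExpands_prod (etaExpands cuts A) (etaExpands cuts B)
  | _, .unitI => etaExpands_unitI
  | _, .circ _ hk C B => etaExpands_circ hk (etaExpands cuts C) (etaExpands cuts B)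
  | _, .infx _ hk A C => etaExpands_infx hk (etaExpands cuts A) (etaExpands cuts C)
  | _, .wprod _ hk A B => etaExpands_wprod hk (etaExpands cuts A) (etaExpands cuts B)
  | _, .unitJ => etaExpands_unitJ
  | _, .amp A B => etaExpands_amp (etaExpands cuts A) (etaExpands cuts B)
  | _, .oplus A B => etaExpands_oplus (etaExpands cuts A) (etaExpands cuts B)

/-- Eta-expansion in DAf, negative case: for every negative-output
(succedent asynchronous) type `N`, the focused sequent `[vec(N)] ⊢w N` (with
the antecedent occurrence of `N` focalised) is derivable in the weakly
focalised calculus DAf. -/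
theorem eta_expansion_DAf_negative :
    ∀ (i : ℕ) (N : Ty i), posb N = false → DAf (bvec N) false i N :=
  fun _ N hN => (etaExpands true N).2 hN

end DA
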